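/- arXiv:math/0303288 — 2 statements merged into one kernel-verified Lean document; each statement's English description precedes it below -/
import Mathlib

section
/- Vanishing rates at the maximizer of the penalization function: Let u, v : ℝ × [0,S] → ℝ be bounded and uniformly continuous, λ > 0 with sup_{0≤t≤S, x∈ℝ} [u(x,t) − v(x,t) − 2λt] ≥ 0, and for ε > 0 let Φ_ε(x,t,y,s) = u(x,t) − v(y,s) − λ(t+s) − ε(x² + y²) − ((t−s)² + (|x|−|y|)²)/ε² − (1/ε)(1/x² + 1/y²) − ε³/((|x|−|y|)² + ε²) − Kχ(x,y), where K = 2(max|u| + max|v|) and χ(x,y) = 1 if x ≤ 0 or y ≤ 0 and χ(x,y) = 0 otherwise. If (x_ε, t_ε, y_ε, s_ε) denotes a global maximum point of Φ_ε over (ℝ × [0,S])², then as ε → 0: (1/ε)(1/x_ε² − 1/y_ε²) → 0, (t_ε − s_ε)/ε → 0, (x_ε − y_ε)/ε → 0, and ε³/((x_ε − y_ε)² + ε²) → 0. -/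
open Filter Topology MeasureTheory

noncomputable section

/-- Assumption (A.1): Lipschitz continuity of the Hamiltonian `H(p,a,g)`. -/
def HypA1 (H : ℝ → ℝ → ℝ → ℝ) : Prop :=
  ∃ C : ℝ, 0 < C ∧
    (∀ p a a' g g' : ℝ, |H p a g - H p a' g'| ≤ C * (|g - g'| + |a - a'|) * (1 + |p|)) ∧
    (∀ p q a g : ℝ, |H p a g - H q a g| ≤ C * |p - q|)

/-- Assumption (A.2): `H` is nondecreasing in the coefficients `a` and `g`. -/
def HypA2 (H : ℝ → ℝ → ℝ → ℝ) : Prop :=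
  ∀ p a g : ℝ, 0 ≤ deriv (fun b => H p b g) a ∧ 0 ≤ deriv (fun h => H p a h) g

/-- Assumption (A.3): `H_p(0,a,g) = 0` and `H_{pp}(0,a,g) < 0`. -/
def HypA3 (H : ℝ → ℝ → ℝ → ℝ) : Prop :=
  ∀ a g : ℝ, deriv (fun p => H p a g) 0 = 0 ∧ iteratedDeriv 2 (fun p => H p a g) 0 < 0

/-- Assumption (A.4): `p ↦ H(p,a,g)` is even, strictly increasing on `(-∞,0)`,
strictly decreasing on `(0,∞)`. -/
def HypA4 (H : ℝ → ℝ → ℝ → ℝ) : Prop :=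
  ∀ a g : ℝ, (∀ p : ℝ, H (-p) a g = H p a g) ∧
    StrictMonoOn (fun p => H p a g) (Set.Iio 0) ∧
    StrictAntiOn (fun p => H p a g) (Set.Ioi 0)

/-- Assumption (A.5): `|H(p,a,g)|/p ≥ C > 0` as `p → ∞`, uniformly in `a`, `g`. -/
def HypA5 (H : ℝ → ℝ → ℝ → ℝ) : Prop :=
  ∃ C : ℝ, 0 < C ∧ ∀ a g : ℝ, ∀ᶠ p in atTop, C ≤ |H p a g| / p

/-- Assumptions (A.6) and (A.8) for the coefficient `a`: piecewise `C¹` with the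
finitely many jump discontinuities (of `a` and `a'`) located at `xs 0 < … < xs (M-1)`,
one-sided limits everywhere, bounded variation, and bounded derivative away from
the jump points. -/
structure HypCoeffA (a : ℝ → ℝ) (M : ℕ) (xs : Fin M → ℝ) : Prop where
  mono : StrictMono xs
  smooth : ∀ x : ℝ, x ∉ Set.range xs → ContDiffAt ℝ 1 a x
  leftLim : ∀ x : ℝ, ∃ L : ℝ, Tendsto a (𝓝[<] x) (𝓝 L)
  rightLim : ∀ x : ℝ, ∃ L : ℝ, Tendsto a (𝓝[>] x) (𝓝 L)
  bv : BoundedVariationOn a Set.univ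
  derivBdd : ∃ K : ℝ, ∀ x : ℝ, x ∉ Set.range xs → |deriv a x| ≤ K

/-- Assumptions (A.7) and (A.8) for the coefficient `g` (defined on `ℝ⁺`):
piecewise continuous with the finitely many jump discontinuities (of `g` and `g'`)
located at `0 < ts 0 < … < ts (N-1)`, one-sided limits, bounded variation on `[0,∞)`,
and bounded derivative away from the jump points. -/
structure HypCoeffG (g : ℝ → ℝ) (N : ℕ) (ts : Fin N → ℝ) : Prop where
  mono : StrictMono ts
  pos : ∀ i : Fin N, 0 < ts i
  cont : ∀ t : ℝ, 0 < t → t ∉ Set.range ts → ContinuousAt g t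
  leftLim : ∀ t : ℝ, 0 < t → ∃ L : ℝ, Tendsto g (𝓝[<] t) (𝓝 L)
  rightLim : ∀ t : ℝ, 0 ≤ t → ∃ L : ℝ, Tendsto g (𝓝[>] t) (𝓝 L)
  bv : BoundedVariationOn g (Set.Ici 0)
  derivBdd : ∃ K : ℝ, ∀ t : ℝ, 0 < t → t ∉ Set.range ts → |deriv g t| ≤ K

/-- `f : ℝ → ℝ` is bounded and uniformly continuous. -/
def BUC (f : ℝ → ℝ) : Prop := (∃ K : ℝ, ∀ x : ℝ, |f x| ≤ K) ∧ UniformContinuous f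

/-- `u : Π_T = ℝ × [0,T] → ℝ` is bounded and uniformly continuous on the strip. -/
def BUCOn (T : ℝ) (u : ℝ → ℝ → ℝ) : Prop :=
  (∃ K : ℝ, ∀ x t : ℝ, t ∈ Set.Icc 0 T → |u x t| ≤ K) ∧
  UniformContinuousOn (fun z : ℝ × ℝ => u z.1 z.2) (Set.univ ×ˢ Set.Icc 0 T)

/-- Spatial partial derivative of a test function. -/
def PartialX (φ : ℝ → ℝ → ℝ) (x t : ℝ) : ℝ := deriv (fun y => φ y t) x

/-- Temporal partial derivative of a test function. -/
def PartialT (φ : ℝ → ℝ → ℝ) (x t : ℝ) : ℝ := deriv (fun s => φ x s) t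

/-- Viscosity subsolution of `u_t + H(u_x, a(x), g(t)) = 0` on `Π_T`, with the
discontinuities of the coefficients treated via one-sided limits `a(x₀⁻)`, `a(x₀⁺)`,
`g(t₀⁻)` (Definition 1.1). -/
def IsViscositySubsolution (H : ℝ → ℝ → ℝ → ℝ) (a g : ℝ → ℝ) (T : ℝ)
    (u : ℝ → ℝ → ℝ) : Prop :=
  ∀ φ : ℝ → ℝ → ℝ, ContDiff ℝ 1 (fun z : ℝ × ℝ => φ z.1 z.2) →
    ∀ x₀ t₀ : ℝ, t₀ ∈ Set.Icc 0 T →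
      IsLocalMaxOn (fun z : ℝ × ℝ => u z.1 z.2 - φ z.1 z.2)
        (Set.univ ×ˢ Set.Icc 0 T) (x₀, t₀) →
      ∀ aL aR gL : ℝ,
        Tendsto a (𝓝[<] x₀) (𝓝 aL) → Tendsto a (𝓝[>] x₀) (𝓝 aR) →
        Tendsto g (𝓝[<] t₀) (𝓝 gL) →
        PartialT φ x₀ t₀ +
          min (H (PartialX φ x₀ t₀) aL gL) (H (PartialX φ x₀ t₀) aR gL) ≤ 0

/-- Viscosity supersolution (Definition 1.1). -/
def IsViscositySupersolution (H : ℝ → ℝ → ℝ → ℝ) (a g : ℝ → ℝ) (T : ℝ)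
    (u : ℝ → ℝ → ℝ) : Prop :=
  ∀ φ : ℝ → ℝ → ℝ, ContDiff ℝ 1 (fun z : ℝ × ℝ => φ z.1 z.2) →
    ∀ x₀ t₀ : ℝ, t₀ ∈ Set.Icc 0 T →
      IsLocalMinOn (fun z : ℝ × ℝ => u z.1 z.2 - φ z.1 z.2)
        (Set.univ ×ˢ Set.Icc 0 T) (x₀, t₀) →
      ∀ aL aR gL : ℝ,
        Tendsto a (𝓝[<] x₀) (𝓝 aL) → Tendsto a (𝓝[>] x₀) (𝓝 aR) →
        Tendsto g (𝓝[<] t₀) (𝓝 gL) →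
        0 ≤ PartialT φ x₀ t₀ +
          max (H (PartialX φ x₀ t₀) aL gL) (H (PartialX φ x₀ t₀) aR gL)

/-- Viscosity solution of the Cauchy problem (1.1) on `Π_T`, with initial datum `u0`:
a bounded uniformly continuous function which is both a viscosity subsolution and a
viscosity supersolution. -/
def IsViscositySolution (H : ℝ → ℝ → ℝ → ℝ) (a g : ℝ → ℝ) (T : ℝ)
    (u : ℝ → ℝ → ℝ) (u0 : ℝ → ℝ) : Prop :=
  BUCOn T u ∧ (∀ x : ℝ, u x 0 = u0 x) ∧
    IsViscositySubsolution H a g T u ∧ IsViscositySupersolution H a g T u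

/-- The Temple singular mapping `Ψ(p,a,g) = sign(p)(H(p,a,g) - H(0,a,g))/H(0,a,g)`. -/
def TempleMap (H : ℝ → ℝ → ℝ → ℝ) (p a g : ℝ) : ℝ :=
  Real.sign p * (H p a g - H 0 a g) / H 0 a g

/-- Entropy solution of the conservation law `p_t + H(p,a(x),g(t))_x = 0` on `Π_T`
(Definition 1.2).  Here `xs` are the jump points of `a`, and `aL m`, `aR m` are the
one-sided limits `a(x_m⁻)`, `a(x_m⁺)`. -/
structure IsEntropySolution (H : ℝ → ℝ → ℝ → ℝ) (a g : ℝ → ℝ) (T : ℝ)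
    (M : ℕ) (xs : Fin M → ℝ) (aL aR : Fin M → ℝ)
    (p : ℝ → ℝ → ℝ) (p0 : ℝ → ℝ) : Prop where
  meas : Measurable (fun z : ℝ × ℝ => p z.1 z.2)
  mem_L1 : IntegrableOn (fun z : ℝ × ℝ => p z.1 z.2) (Set.univ ×ˢ Set.Icc 0 T)
  mem_Linf : ∃ K : ℝ, ∀ x t : ℝ, t ∈ Set.Icc 0 T → |p x t| ≤ K
  bv_psi : ∀ t ∈ Set.Icc (0:ℝ) T,
    BoundedVariationOn (fun x => TempleMap H (p x t) (a x) (g t)) Set.univ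
  lip_L1 : ∃ L : ℝ, ∀ t ∈ Set.Icc (0:ℝ) T, ∀ t' ∈ Set.Icc (0:ℝ) T,
    (∫ x : ℝ, |p x t - p x t'|) ≤ L * |t - t'|
  weak : ∀ φ : ℝ → ℝ → ℝ, ContDiff ℝ 1 (fun z : ℝ × ℝ => φ z.1 z.2) →
    HasCompactSupport (fun z : ℝ × ℝ => φ z.1 z.2) →
    (∫ x : ℝ, ∫ t in Set.Icc (0:ℝ) T,
        (p x t * PartialT φ x t + H (p x t) (a x) (g t) * PartialX φ x t))
      + (∫ x : ℝ, φ x 0 * p0 x) = 0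
  entropy : ∀ c : ℝ, ∀ φ : ℝ → ℝ → ℝ, ContDiff ℝ 1 (fun z : ℝ × ℝ => φ z.1 z.2) →
    HasCompactSupport (fun z : ℝ × ℝ => φ z.1 z.2) → (∀ x t : ℝ, 0 ≤ φ x t) →
    0 ≤ (∫ x : ℝ, ∫ t in Set.Icc (0:ℝ) T,
          (|p x t - c| * PartialT φ x t
            + Real.sign (p x t - c) * (H (p x t) (a x) (g t) - H c (a x) (g t))
                * PartialX φ x t))
        - (∫ x : ℝ, ∫ t in Set.Icc (0:ℝ) T,
            Real.sign (p x t - c) * deriv (fun b => H c b (g t)) (a x)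
              * deriv a x * φ x t)
        + ∑ m : Fin M, ∫ t in Set.Icc (0:ℝ) T,
            |H c (aR m) (g t) - H c (aL m) (g t)| * φ (xs m) t

/-- The indicator `χ(x,y) = 1` if `x ≤ 0` or `y ≤ 0`, `0` otherwise. -/
def chiInd (x y : ℝ) : ℝ := if x ≤ 0 ∨ y ≤ 0 then 1 else 0

/-- The penalization function `Φ_ε` of (2.6). -/
def PhiPen (u v : ℝ → ℝ → ℝ) (lam K ε : ℝ) (x t y s : ℝ) : ℝ :=
  u x t - v y s - lam * (t + s) - ε * (x ^ 2 + y ^ 2)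
    - ((t - s) ^ 2 + (|x| - |y|) ^ 2) / ε ^ 2
    - (1 / ε) * (1 / x ^ 2 + 1 / y ^ 2)
    - ε ^ 3 / ((|x| - |y|) ^ 2 + ε ^ 2)
    - K * chiInd x y

/-- (A.1) for a Hamiltonian `H(p,a)` with `g` constant (suppressed). -/
def HypA1' (H : ℝ → ℝ → ℝ) : Prop :=
  ∃ C : ℝ, 0 < C ∧
    (∀ p a a' : ℝ, |H p a - H p a'| ≤ C * |a - a'| * (1 + |p|)) ∧
    (∀ p q a : ℝ, |H p a - H q a| ≤ C * |p - q|)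

/-- (A.3) for `H(p,a)`. -/
def HypA3' (H : ℝ → ℝ → ℝ) : Prop :=
  ∀ a : ℝ, deriv (fun p => H p a) 0 = 0 ∧ iteratedDeriv 2 (fun p => H p a) 0 < 0

/-- (A.4) for `H(p,a)`. -/
def HypA4' (H : ℝ → ℝ → ℝ) : Prop :=
  ∀ a : ℝ, (∀ p : ℝ, H (-p) a = H p a) ∧
    StrictMonoOn (fun p => H p a) (Set.Iio 0) ∧
    StrictAntiOn (fun p => H p a) (Set.Ioi 0)

/-- (A.5) for `H(p,a)`. -/
def HypA5' (H : ℝ → ℝ → ℝ) : Prop :=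
  ∃ C : ℝ, 0 < C ∧ ∀ a : ℝ, ∀ᶠ p in atTop, C ≤ |H p a| / p

/-- Viscosity subsolution for a time-independent Hamiltonian `H(p,a)`. -/
def IsViscositySubsolution2 (H : ℝ → ℝ → ℝ) (a : ℝ → ℝ) (T : ℝ)
    (u : ℝ → ℝ → ℝ) : Prop :=
  ∀ φ : ℝ → ℝ → ℝ, ContDiff ℝ 1 (fun z : ℝ × ℝ => φ z.1 z.2) →
    ∀ x₀ t₀ : ℝ, t₀ ∈ Set.Icc 0 T →
      IsLocalMaxOn (fun z : ℝ × ℝ => u z.1 z.2 - φ z.1 z.2)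
        (Set.univ ×ˢ Set.Icc 0 T) (x₀, t₀) →
      ∀ aL aR : ℝ,
        Tendsto a (𝓝[<] x₀) (𝓝 aL) → Tendsto a (𝓝[>] x₀) (𝓝 aR) →
        PartialT φ x₀ t₀ +
          min (H (PartialX φ x₀ t₀) aL) (H (PartialX φ x₀ t₀) aR) ≤ 0

/-- Viscosity supersolution for a time-independent Hamiltonian `H(p,a)`. -/
def IsViscositySupersolution2 (H : ℝ → ℝ → ℝ) (a : ℝ → ℝ) (T : ℝ)
    (u : ℝ → ℝ → ℝ) : Prop :=
  ∀ φ : ℝ → ℝ → ℝ, ContDiff ℝ 1 (fun z : ℝ × ℝ => φ z.1 z.2) →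
    ∀ x₀ t₀ : ℝ, t₀ ∈ Set.Icc 0 T →
      IsLocalMinOn (fun z : ℝ × ℝ => u z.1 z.2 - φ z.1 z.2)
        (Set.univ ×ˢ Set.Icc 0 T) (x₀, t₀) →
      ∀ aL aR : ℝ,
        Tendsto a (𝓝[<] x₀) (𝓝 aL) → Tendsto a (𝓝[>] x₀) (𝓝 aR) →
        0 ≤ PartialT φ x₀ t₀ +
          max (H (PartialX φ x₀ t₀) aL) (H (PartialX φ x₀ t₀) aR)

/-- Viscosity solution for a time-independent Hamiltonian `H(p,a)`. -/
def IsViscositySolution2 (H : ℝ → ℝ → ℝ) (a : ℝ → ℝ) (T : ℝ)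
    (u : ℝ → ℝ → ℝ) (u0 : ℝ → ℝ) : Prop :=
  BUCOn T u ∧ (∀ x : ℝ, u x 0 = u0 x) ∧
    IsViscositySubsolution2 H a T u ∧ IsViscositySupersolution2 H a T u

/-- Entropy solution of the Riemann problem (3.1) for the conservation law
`p_t + H(p,a)_x = 0` with coefficient `aL` for `x ≤ 0`, `aR` for `x > 0` and
Riemann data `pl`, `pr`: a bounded self-similar weak solution satisfying the
Kružkov-type entropy inequality with the extra interface term at `x = 0`
(the specialization of (1.17) to this piecewise constant setting). -/
structure IsRiemannEntropySolution (H : ℝ → ℝ → ℝ) (aL aR pl pr : ℝ)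
    (p : ℝ → ℝ → ℝ) : Prop where
  bdd : ∃ K : ℝ, ∀ x t : ℝ, |p x t| ≤ K
  selfSimilar : ∀ c x t : ℝ, 0 < c → 0 < t → p (c * x) (c * t) = p x t
  weak : ∀ φ : ℝ → ℝ → ℝ, ContDiff ℝ 1 (fun z : ℝ × ℝ => φ z.1 z.2) →
    HasCompactSupport (fun z : ℝ × ℝ => φ z.1 z.2) →
    (∫ x : ℝ, ∫ t in Set.Ioi (0:ℝ),
        (p x t * PartialT φ x t + H (p x t) (if x ≤ 0 then aL else aR) * PartialX φ x t))
      + (∫ x : ℝ, φ x 0 * (if x < 0 then pl else pr)) = 0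
  entropy : ∀ c : ℝ, ∀ φ : ℝ → ℝ → ℝ, ContDiff ℝ 1 (fun z : ℝ × ℝ => φ z.1 z.2) →
    HasCompactSupport (fun z : ℝ × ℝ => φ z.1 z.2) → (∀ x t : ℝ, 0 ≤ φ x t) →
    0 ≤ (∫ x : ℝ, ∫ t in Set.Ioi (0:ℝ),
          (|p x t - c| * PartialT φ x t
            + Real.sign (p x t - c)
                * (H (p x t) (if x ≤ 0 then aL else aR) - H c (if x ≤ 0 then aL else aR))
                * PartialX φ x t))
        + ∫ t in Set.Ioi (0:ℝ), |H c aR - H c aL| * φ 0 t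

/-- The function `u` of formula (3.23), extended to `t = 0` by the Riemann
initial data for the Hamilton–Jacobi equation. -/
def uRiem (H : ℝ → ℝ → ℝ) (u00 aL aR pl pr : ℝ) (p : ℝ → ℝ → ℝ) :
    ℝ → ℝ → ℝ :=
  fun x t =>
    if t = 0 then u00 + (if x ≤ 0 then pl * x else pr * x)
    else u00 + x * p x t - t * (if x ≤ 0 then H (p x t) aL else H (p x t) aR)


/-! Testing `Φ_ε` at its maximizer against three points bounds the penalties. The diagonal
point `x = y = ε^{-1/2}`, `t = s = 0`, where every penalty is `O(1)`, bounds the total penalty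
by a constant; this gives `t - s, x - y = O(ε)`, `ε (y² - x²) = O(ε^{3/2})` and
`1 / (ε x²), 1 / (ε y²) = O(1)`, whence the first rate as
`(1 / ε) (1 / x² - 1 / y²) = ε (y² - x²) · 1 / (ε x²) · 1 / (ε y²)`.
Moving `s` to `t`, resp. `x` to `y`, bounds `((t - s) / ε)²`, resp. `((x - y) / ε)²`, by an
increment of `v`, resp. `u`, over a distance `O(ε)` plus terms already known to vanish, and
uniform continuity concludes. -/

open Set Uniformity

theorem UniformContinuousOn.tendsto_dist_comp_zero {ι α β : Type*} [PseudoMetricSpace α]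
    [PseudoMetricSpace β] {f : α → β} {s : Set α} (hf : UniformContinuousOn f s)
    {l : Filter ι} {p q : ι → α} (hp : ∀ᶠ i in l, p i ∈ s) (hq : ∀ᶠ i in l, q i ∈ s)
    (hpq : Tendsto (fun i => dist (p i) (q i)) l (𝓝 0)) :
    Tendsto (fun i => dist (f (p i)) (f (q i))) l (𝓝 0) := by
  have hpq' : Tendsto (fun i => (p i, q i)) l (𝓤 α ⊓ 𝓟 (s ×ˢ s)) :=
    tendsto_inf.2 ⟨tendsto_uniformity_iff_dist_tendsto_zero.2 hpq, tendsto_principal.2 (hp.and hq)⟩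
  exact tendsto_uniformity_iff_dist_tendsto_zero.1 (Tendsto.comp hf hpq')

theorem UniformContinuousOn.tendsto_sub_comp_zero {ι : Type*} {f : ℝ × ℝ → ℝ} {T : Set ℝ}
    (hf : UniformContinuousOn f (univ ×ˢ T)) {l : Filter ι} {x t y s : ι → ℝ}
    (ht : ∀ᶠ i in l, t i ∈ T) (hs : ∀ᶠ i in l, s i ∈ T)
    (hxy : Tendsto (fun i => x i - y i) l (𝓝 0)) (hts : Tendsto (fun i => t i - s i) l (𝓝 0)) :
    Tendsto (fun i => f (x i, t i) - f (y i, s i)) l (𝓝 0) := by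
  have hdist : Tendsto (fun i => dist (x i, t i) (y i, s i)) l (𝓝 0) := by
    simpa [Prod.dist_eq, Real.dist_eq] using hxy.abs.max hts.abs
  refine (tendsto_zero_iff_abs_tendsto_zero _).2 ?_
  simpa only [Real.dist_eq, Function.comp_def] using
    hf.tendsto_dist_comp_zero (ht.mono fun _ h => ⟨trivial, h⟩) (hs.mono fun _ h => ⟨trivial, h⟩)
      hdist

theorem tendsto_zero_of_sq_le {ι : Type*} {l : Filter ι} {f g : ι → ℝ}
    (hg : Tendsto g l (𝓝 0)) (hfg : ∀ᶠ i in l, f i ^ 2 ≤ g i) : Tendsto f l (𝓝 0) := by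
  have hsq : Tendsto (fun i => f i ^ 2) l (𝓝 0) :=
    squeeze_zero' (.of_forall fun _ => sq_nonneg _) hfg hg
  refine (tendsto_zero_iff_abs_tendsto_zero _).2 ?_
  simpa [Real.sqrt_sq_eq_abs, Function.comp_def] using hsq.sqrt

def phiPenalty (ε x t y s : ℝ) : ℝ :=
  ε * (x ^ 2 + y ^ 2) + ((t - s) ^ 2 + (x - y) ^ 2) / ε ^ 2
    + (1 / ε) * (1 / x ^ 2 + 1 / y ^ 2) + ε ^ 3 / ((x - y) ^ 2 + ε ^ 2)

theorem phiPen_of_pos (u v : ℝ → ℝ → ℝ) (lam K ε : ℝ) {x y : ℝ} (hx : 0 < x) (hy : 0 < y)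
    (t s : ℝ) :
    PhiPen u v lam K ε x t y s = u x t - v y s - lam * (t + s) - phiPenalty ε x t y s := by
  simp only [PhiPen, chiInd, phiPenalty, abs_of_pos hx, abs_of_pos hy, hx.not_ge, hy.not_ge,
    or_self, if_false]
  ring

theorem phiPenalty_inv_sqrt {ε : ℝ} (hε : 0 < ε) :
    phiPenalty ε (√ε)⁻¹ 0 (√ε)⁻¹ 0 = 4 + ε := by
  have hsq : ((√ε)⁻¹) ^ 2 = ε⁻¹ := by rw [inv_pow, Real.sq_sqrt hε.le]
  simp only [phiPenalty, hsq, sub_self]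
  field_simp
  ring

structure IsPenalizationMax (S : ℝ) (Φ : ℝ → ℝ → ℝ → ℝ → ℝ) (x t y s : ℝ) : Prop where
  pos_x : 0 < x
  pos_y : 0 < y
  mem_t : t ∈ Icc 0 S
  mem_s : s ∈ Icc 0 S
  le : ∀ x' t' y' s' : ℝ, x' ≠ 0 → y' ≠ 0 → t' ∈ Icc 0 S → s' ∈ Icc 0 S →
    Φ x' t' y' s' ≤ Φ x t y s

namespace IsPenalizationMax

variable {S lam K ε x t y s : ℝ} {u v : ℝ → ℝ → ℝ}

theorem phiPenalty_le {Mu Mv : ℝ}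
    (hu : Mu ∈ upperBounds ((fun z : ℝ × ℝ => |u z.1 z.2|) '' (univ ×ˢ Icc 0 S)))
    (hv : Mv ∈ upperBounds ((fun z : ℝ × ℝ => |v z.1 z.2|) '' (univ ×ˢ Icc 0 S)))
    (hlam : 0 ≤ lam) (hε : 0 < ε) (hm : IsPenalizationMax S (PhiPen u v lam K ε) x t y s) :
    phiPenalty ε x t y s ≤ 2 * (Mu + Mv) + 4 + ε := by
  obtain ⟨hx, hy, ht, hs, hm⟩ := hm
  have h0 : (0 : ℝ) ∈ Icc 0 S := ⟨le_rfl, ht.1.trans ht.2⟩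
  have hz : 0 < (√ε)⁻¹ := inv_pos.2 (Real.sqrt_pos.2 hε)
  have hcmp := hm _ 0 _ 0 hz.ne' hz.ne' h0 h0
  rw [phiPen_of_pos u v lam K ε hz hz, phiPen_of_pos u v lam K ε hx hy,
    phiPenalty_inv_sqrt hε] at hcmp
  have hts : 0 ≤ lam * (t + s) := mul_nonneg hlam (add_nonneg ht.1 hs.1)
  linarith [abs_le.1 (hu ⟨(x, t), ⟨trivial, ht⟩, rfl⟩),
    abs_le.1 (hv ⟨(y, s), ⟨trivial, hs⟩, rfl⟩),
    abs_le.1 (hu ⟨((√ε)⁻¹, 0), ⟨trivial, h0⟩, rfl⟩),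
    abs_le.1 (hv ⟨((√ε)⁻¹, 0), ⟨trivial, h0⟩, rfl⟩)]

theorem sq_time_rate_le (hm : IsPenalizationMax S (PhiPen u v lam K ε) x t y s) :
    ((t - s) / ε) ^ 2 ≤ v y t - v y s + lam * (t - s) := by
  obtain ⟨hx, hy, ht, hs, hm⟩ := hm
  have hcmp := hm x t y t hx.ne' hy.ne' ht ht
  simp only [phiPen_of_pos u v lam K ε hx hy, phiPenalty, sub_self, add_div, ne_eq,
    OfNat.ofNat_ne_zero, not_false_eq_true, zero_pow, zero_add] at hcmp
  rw [div_pow]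
  linarith

theorem sq_space_rate_le (hε : 0 < ε) (hm : IsPenalizationMax S (PhiPen u v lam K ε) x t y s) :
    ((x - y) / ε) ^ 2 ≤
      u x t - u y t + ε * (y ^ 2 - x ^ 2) - 1 / ε * (1 / x ^ 2 - 1 / y ^ 2) + ε := by
  obtain ⟨hx, hy, ht, hs, hm⟩ := hm
  have hcmp := hm y t y s hy.ne' hy.ne' ht hs
  have hdiag : ε ^ 3 / ε ^ 2 = ε := by field_simp
  have hnonneg : 0 ≤ ε ^ 3 / ((x - y) ^ 2 + ε ^ 2) := by positivity
  simp only [phiPen_of_pos u v lam K ε hx hy, phiPen_of_pos u v lam K ε hy hy, phiPenalty,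
    add_div, mul_add, sub_self, ne_eq, OfNat.ofNat_ne_zero, not_false_eq_true, zero_pow,
    add_zero, zero_add, hdiag] at hcmp
  rw [div_pow, mul_sub, mul_sub]
  linarith

end IsPenalizationMax

theorem pow_three_div_sq_add_sq_le {ε : ℝ} (hε : 0 < ε) (a : ℝ) :
    ε ^ 3 / (a ^ 2 + ε ^ 2) ≤ ε := by
  rw [div_le_iff₀ (by positivity)]
  nlinarith [mul_nonneg hε.le (sq_nonneg a)]

theorem phiPenalty_bounds {ε x t y s C : ℝ} (hε : 0 < ε) (hx : 0 < x) (hy : 0 < y)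
    (hP : phiPenalty ε x t y s ≤ C) :
    (t - s) ^ 2 ≤ C * ε ^ 2 ∧ (x - y) ^ 2 ≤ C * ε ^ 2 ∧
      (ε * (y ^ 2 - x ^ 2)) ^ 2 ≤ 2 * C ^ 2 * ε ^ 3 ∧
      |1 / ε * (1 / x ^ 2 - 1 / y ^ 2)| ≤ C ^ 2 * |ε * (y ^ 2 - x ^ 2)| := by
  have hε2 : 0 < ε ^ 2 := by positivity
  have hP1 : 0 ≤ ε * (x ^ 2 + y ^ 2) := by positivity
  have hP2 : 0 ≤ ((t - s) ^ 2 + (x - y) ^ 2) / ε ^ 2 := by positivity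
  have hPx : 0 ≤ 1 / (ε * x ^ 2) := by positivity
  have hPy : 0 ≤ 1 / (ε * y ^ 2) := by positivity
  have hP3 : 0 ≤ ε ^ 3 / ((x - y) ^ 2 + ε ^ 2) := by positivity
  have hinv : 1 / ε * (1 / x ^ 2 + 1 / y ^ 2) = 1 / (ε * x ^ 2) + 1 / (ε * y ^ 2) := by
    field_simp
  rw [phiPenalty, hinv] at hP
  have hC : 0 ≤ C := by linarith
  have hdiff : (t - s) ^ 2 + (x - y) ^ 2 ≤ C * ε ^ 2 := by
    rw [← div_le_iff₀ hε2]; linarith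
  have hsum : ε * (x + y) ^ 2 ≤ 2 * C := by
    nlinarith [mul_nonneg hε.le (sq_nonneg (x - y))]
  refine ⟨by linarith [sq_nonneg (x - y)], by linarith [sq_nonneg (t - s)], ?_, ?_⟩
  · calc (ε * (y ^ 2 - x ^ 2)) ^ 2 = ε * (x - y) ^ 2 * (ε * (x + y) ^ 2) := by ring
      _ ≤ ε * (C * ε ^ 2) * (2 * C) := by gcongr; linarith [sq_nonneg (t - s)]
      _ = 2 * C ^ 2 * ε ^ 3 := by ring
  · have hprod : 1 / ε * (1 / x ^ 2 - 1 / y ^ 2) =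
        ε * (y ^ 2 - x ^ 2) * (1 / (ε * x ^ 2)) * (1 / (ε * y ^ 2)) := by
      field_simp
    rw [hprod, abs_mul, abs_mul, abs_of_nonneg hPx, abs_of_nonneg hPy]
    calc _ ≤ |ε * (y ^ 2 - x ^ 2)| * C * C := by gcongr <;> linarith
      _ = C ^ 2 * |ε * (y ^ 2 - x ^ 2)| := by ring

theorem penalization_maximizer_vanishing_rates_general
    (S : ℝ) (u v : ℝ → ℝ → ℝ)
    (hu : BUCOn S u) (hv : BUCOn S v)
    (Mu Mv : ℝ)
    (hMu : IsLUB ((fun z : ℝ × ℝ => |u z.1 z.2|) '' (Set.univ ×ˢ Set.Icc 0 S)) Mu)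
    (hMv : IsLUB ((fun z : ℝ × ℝ => |v z.1 z.2|) '' (Set.univ ×ˢ Set.Icc 0 S)) Mv)
    (lam : ℝ) (hlam : 0 < lam)
    (xe te ye se : ℝ → ℝ)
    (hmax : ∀ ε : ℝ, 0 < ε →
      0 < xe ε ∧ 0 < ye ε ∧ te ε ∈ Set.Icc 0 S ∧ se ε ∈ Set.Icc 0 S ∧
      ∀ x t y s : ℝ, x ≠ 0 → y ≠ 0 → t ∈ Set.Icc 0 S → s ∈ Set.Icc 0 S →
        PhiPen u v lam (2 * (Mu + Mv)) ε x t y s ≤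
          PhiPen u v lam (2 * (Mu + Mv)) ε (xe ε) (te ε) (ye ε) (se ε)) :
    Filter.Tendsto (fun ε : ℝ => (1 / ε) * (1 / (xe ε) ^ 2 - 1 / (ye ε) ^ 2))
        (𝓝[>] 0) (𝓝 0) ∧
    Filter.Tendsto (fun ε : ℝ => (te ε - se ε) / ε) (𝓝[>] 0) (𝓝 0) ∧
    Filter.Tendsto (fun ε : ℝ => (xe ε - ye ε) / ε) (𝓝[>] 0) (𝓝 0) ∧
    Filter.Tendsto (fun ε : ℝ => ε ^ 3 / ((xe ε - ye ε) ^ 2 + ε ^ 2))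
        (𝓝[>] 0) (𝓝 0) := by
  have hm (ε : ℝ) (hε : 0 < ε) :
      IsPenalizationMax S (PhiPen u v lam (2 * (Mu + Mv)) ε) (xe ε) (te ε) (ye ε) (se ε) :=
    let ⟨hx, hy, ht, hs, hle⟩ := hmax ε hε; ⟨hx, hy, ht, hs, hle⟩
  set C := 2 * (Mu + Mv) + 5
  have hpos : ∀ᶠ ε in 𝓝[>] (0 : ℝ), 0 < ε := self_mem_nhdsWithin
  have hid : Tendsto (fun ε : ℝ => ε) (𝓝[>] 0) (𝓝 0) := nhdsWithin_le_nhds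
  have hε : ∀ᶠ ε in 𝓝[>] (0 : ℝ), ε ∈ Ioc 0 1 := Ioc_mem_nhdsGT one_pos
  have hB := hε.mono fun ε hε =>
    phiPenalty_bounds (C := C) hε.1 (hm ε hε.1).pos_x (hm ε hε.1).pos_y <|
      ((hm ε hε.1).phiPenalty_le hMu.1 hMv.1 hlam.le hε.1).trans (by linarith [hε.2])
  have hts := tendsto_zero_of_sq_le (by simpa using (hid.pow 2).const_mul C)
    (hB.mono fun _ h => h.1)
  have hxy := tendsto_zero_of_sq_le (by simpa using (hid.pow 2).const_mul C)
    (hB.mono fun _ h => h.2.1)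
  have hsq := tendsto_zero_of_sq_le (by simpa using (hid.pow 3).const_mul (2 * C ^ 2))
    (hB.mono fun _ h => h.2.2.1)
  have hinv : Tendsto (fun ε => 1 / ε * (1 / xe ε ^ 2 - 1 / ye ε ^ 2)) (𝓝[>] 0) (𝓝 0) :=
    squeeze_zero_norm' (hB.mono fun _ h => h.2.2.2) (by simpa using hsq.abs.const_mul (C ^ 2))
  have hte := hpos.mono fun ε hε => (hm ε hε).mem_t
  refine ⟨hinv, tendsto_zero_of_sq_le ?_ (hpos.mono fun ε hε => (hm ε hε).sq_time_rate_le),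
    tendsto_zero_of_sq_le ?_ (hpos.mono fun ε hε => (hm ε hε).sq_space_rate_le hε),
    squeeze_zero' (hpos.mono fun ε hε => by positivity)
      (hpos.mono fun ε hε => pow_three_div_sq_add_sq_le hε _) hid⟩
  · have hvt := hv.2.tendsto_sub_comp_zero (x := ye) (y := ye) hte
      (hpos.mono fun ε hε => (hm ε hε).mem_s) (by simp) hts
    simpa using hvt.add (hts.const_mul lam)
  · have hux := hu.2.tendsto_sub_comp_zero (t := te) (s := te) hte hte hxy (by simp)
    simpa using ((hux.add hsq).sub hinv).add hid

/-- **Vanishing rates at the maximizer of the penalization function (2.8)–(2.9).**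
With `u`, `v`, `λ`, `K = 2(Mu + Mv)` and `Φ_ε` as in Lemma 2.3, if for every `ε > 0`
the point `(x_ε, t_ε, y_ε, s_ε)` (with `x_ε, y_ε > 0` and `t_ε, s_ε ∈ [0,S]`) is a
global maximum of `Φ_ε` over its domain, then, as `ε → 0⁺`,
`(1/ε)(1/x_ε² − 1/y_ε²) → 0`, `(t_ε − s_ε)/ε → 0`, `(x_ε − y_ε)/ε → 0` and
`ε³/((x_ε − y_ε)² + ε²) → 0`. -/
theorem penalization_maximizer_vanishing_rates
    (S : ℝ) (hS : 0 < S) (u v : ℝ → ℝ → ℝ)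
    (hu : BUCOn S u) (hv : BUCOn S v)
    (Mu Mv : ℝ)
    (hMu : IsLUB ((fun z : ℝ × ℝ => |u z.1 z.2|) '' (Set.univ ×ˢ Set.Icc 0 S)) Mu)
    (hMv : IsLUB ((fun z : ℝ × ℝ => |v z.1 z.2|) '' (Set.univ ×ˢ Set.Icc 0 S)) Mv)
    (lam : ℝ) (hlam : 0 < lam)
    (hsup : 0 ≤ sSup {r : ℝ | ∃ x t : ℝ, t ∈ Set.Icc 0 S ∧
      r = u x t - v x t - 2 * lam * t})
    (xe te ye se : ℝ → ℝ)
    (hmax : ∀ ε : ℝ, 0 < ε →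
      0 < xe ε ∧ 0 < ye ε ∧ te ε ∈ Set.Icc 0 S ∧ se ε ∈ Set.Icc 0 S ∧
      ∀ x t y s : ℝ, x ≠ 0 → y ≠ 0 → t ∈ Set.Icc 0 S → s ∈ Set.Icc 0 S →
        PhiPen u v lam (2 * (Mu + Mv)) ε x t y s ≤
          PhiPen u v lam (2 * (Mu + Mv)) ε (xe ε) (te ε) (ye ε) (se ε)) :
    Filter.Tendsto (fun ε : ℝ => (1 / ε) * (1 / (xe ε) ^ 2 - 1 / (ye ε) ^ 2))
        (𝓝[>] 0) (𝓝 0) ∧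
    Filter.Tendsto (fun ε : ℝ => (te ε - se ε) / ε) (𝓝[>] 0) (𝓝 0) ∧
    Filter.Tendsto (fun ε : ℝ => (xe ε - ye ε) / ε) (𝓝[>] 0) (𝓝 0) ∧
    Filter.Tendsto (fun ε : ℝ => ε ^ 3 / ((xe ε - ye ε) ^ 2 + ε ^ 2))
        (𝓝[>] 0) (𝓝 0) :=
  penalization_maximizer_vanishing_rates_general S u v hu hv Mu Mv hMu hMv lam hlam xe te ye se hmax
end
end

section
/- Interaction estimate for a p-wave crossing a g-wave (claim (3.17)): Let H = H(p,a,g) be three times continuously differentiable with H(0,a,g) > 0, and let Ψ(p,a,g) = sign(p)(H(p,a,g) − H(0,a,g))/H(0,a,g). Fix bounds a̲ ≤ a ≤ ā, g̲ ≤ g ≤ ḡ, |p| ≤ C̄, and suppose there are constants P > 0 and 0 < c₀ ≤ C₀ such that for all a ∈ [a̲, ā] and g ∈ [g̲, ḡ]: 0 < c₀ ≤ H_{pp}(p,a,g) ≤ C₀ whenever |p| ≤ P, and 0 < c₀ ≤ |H_p(p,a,g)| ≤ C₀ whenever P ≤ |p| ≤ C̄; suppose also that p ↦ H(p,a,g)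 is even with H_p(0,a,g) = 0, and that the mixed derivatives Ψ_{pg} and Ψ_{ppg} are bounded on the region |p| ≤ C̄, a ∈ [a̲,ā], g ∈ [g̲,ḡ]. Then there exists a constant C, depending only on these bounds, such that for all p_l, p_r with |p_l|, |p_r| ≤ C̄, all a ∈ [a̲,ā], and all g⁻, g⁺ ∈ [g̲,ḡ]: |Ψ(p_r,a,g⁺) − Ψ(p_l,a,g⁺)| − |Ψ(p_r,a,g⁻) − Ψ(p_l,a,g⁻)| ≤ C |g⁺ − g⁻| · |Ψ(p_r,a,g⁻) − Ψ(p_l,a,g⁻)|. -/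
open Filter Topology MeasureTheory

noncomputable section

/-! Because `H_p(0,a,g) = 0`, the map `p ↦ Ψ(p,a,g)` is differentiable with
`Ψ_p = sign(p) H_p / H(0,a,g)`; convexity for `|p| ≤ P` and the bound `|H_p| ≥ c₀` beyond `P`
give `Ψ_p ≥ c₀ min(|p|,1) / H(0,a,g)`. Away from `p = 0`, `Ψ_pp = sign(p) H_pp / H(0,a,g)`, so the
bound on `Ψ_ppg` and the mean value theorem in `g` control `H_pp / H(0,a,g)` uniformly in `g`;
integrating from `p = 0`, where `Ψ_p` vanishes for every `g`, gives
`|Ψ_p(p,a,g⁺) - Ψ_p(p,a,g⁻)| ≤ B |g⁺ - g⁻| |p| ≤ C |g⁺ - g⁻| Ψ_p(p,a,g⁻)`. Comparing the two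
derivatives along `[p_l, p_r]` bounds the change of the jump `|Ψ(p_r) - Ψ(p_l)|`, with
`C = B max(1, C̄) M / c₀` for `M` the maximum of `H(0,·,·)` on the compact box. -/

open Set Function

theorem Real.abs_sign_le_one (x : ℝ) : |Real.sign x| ≤ 1 := by
  rcases Real.sign_apply_eq x with h | h | h <;> simp [h]

theorem Real.abs_sign_of_ne_zero {x : ℝ} (hx : x ≠ 0) : |Real.sign x| = 1 := by
  rcases Real.sign_apply_eq_of_ne_zero x hx with h | h <;> simp [h]

theorem Real.sign_eventuallyEq_const {x : ℝ} (hx : x ≠ 0) :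
    Real.sign =ᶠ[𝓝 x] fun _ => Real.sign x := by
  rcases hx.lt_or_gt with hx | hx
  · filter_upwards [Iio_mem_nhds hx] with y hy
    rw [Real.sign_of_neg hy, Real.sign_of_neg hx]
  · filter_upwards [Ioi_mem_nhds hx] with y hy
    rw [Real.sign_of_pos hy, Real.sign_of_pos hx]

theorem HasDerivAt.sign_mul_of_zero {f : ℝ → ℝ} (hf : HasDerivAt f 0 0) (hf0 : f 0 = 0) :
    HasDerivAt (fun x => Real.sign x * f x) 0 0 := by
  rw [hasDerivAt_iff_isLittleO_nhds_zero] at hf ⊢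
  simp only [zero_add, hf0, mul_zero, sub_zero, smul_zero] at hf ⊢
  refine Asymptotics.IsBigO.trans_isLittleO (Asymptotics.isBigO_of_le _ fun x => ?_) hf
  rw [norm_mul, Real.norm_eq_abs]
  exact mul_le_of_le_one_left (norm_nonneg _) (Real.abs_sign_le_one x)

theorem le_of_hasDerivAt_nonneg {φ φ' : ℝ → ℝ} {a b : ℝ} (hab : a ≤ b)
    (hφ : ∀ x ∈ Icc a b, HasDerivAt φ (φ' x) x) (hφ' : ∀ x ∈ Ioo a b, 0 ≤ φ' x) :
    φ a ≤ φ b :=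
  monotoneOn_of_hasDerivWithinAt_nonneg (convex_Icc a b) (HasDerivAt.continuousOn hφ)
    (fun x hx => (hφ x (interior_subset hx)).hasDerivWithinAt) (by rwa [interior_Icc])
    (left_mem_Icc.2 hab) (right_mem_Icc.2 hab) hab

theorem abs_sub_le_mul_abs_of_hasDerivAt {w w' : ℝ → ℝ} {x y M : ℝ}
    (hw : ∀ s ∈ uIcc x y, HasDerivAt w (w' s) s) (hM : ∀ s ∈ uIoo x y, |w' s| ≤ M) :
    |w y - w x| ≤ M * |y - x| := by
  wlog hxy : x < y generalizing x y
  · rcases (not_lt.mp hxy).eq_or_lt with rfl | hyx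
    · simp
    rw [abs_sub_comm, abs_sub_comm y]
    exact this (uIcc_comm x y ▸ hw) (uIoo_comm x y ▸ hM) hyx
  obtain ⟨c, hc, hslope⟩ := exists_hasDerivAt_eq_slope w w' hxy
    (HasDerivAt.continuousOn fun s hs => hw s (Icc_subset_uIcc hs))
    fun s hs => hw s (Icc_subset_uIcc (Ioo_subset_Icc_self hs))
  rw [eq_div_iff (sub_ne_zero.mpr hxy.ne')] at hslope
  rw [← hslope, abs_mul]
  exact mul_le_mul_of_nonneg_right (hM c (by rwa [uIoo_of_lt hxy])) (abs_nonneg _)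

theorem abs_sub_abs_le_mul_abs_of_hasDerivAt {f g f' g' : ℝ → ℝ} {a b c : ℝ}
    (hf : ∀ x ∈ uIcc a b, HasDerivAt f (f' x) x) (hg : ∀ x ∈ uIcc a b, HasDerivAt g (g' x) x)
    (hg' : ∀ x ∈ uIcc a b, 0 ≤ g' x) (hfg : ∀ x ∈ uIcc a b, |f' x - g' x| ≤ c * g' x) :
    |f b - f a| - |g b - g a| ≤ c * |g b - g a| := by
  wlog hab : a ≤ b generalizing a b
  · rw [abs_sub_comm (f b), abs_sub_comm (g b)]
    exact this (uIcc_comm a b ▸ hf) (uIcc_comm a b ▸ hg) (uIcc_comm a b ▸ hg')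
      (uIcc_comm a b ▸ hfg) (not_le.mp hab).le
  rw [uIcc_of_le hab] at hf hg hg' hfg
  have hmono : ∀ {φ φ' : ℝ → ℝ}, (∀ x ∈ Icc a b, HasDerivAt φ (φ' x) x) →
      (∀ x ∈ Icc a b, 0 ≤ φ' x) → φ a ≤ φ b := fun hφ hφ' =>
    le_of_hasDerivAt_nonneg hab hφ fun x hx => hφ' x (Ioo_subset_Icc_self hx)
  have hg_le : g a ≤ g b := hmono hg hg'
  have hupper := hmono (φ := fun x => c * g x - (f x - g x))
    (fun x hx => ((hg x hx).const_mul c).sub ((hf x hx).sub (hg x hx)))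
    fun x hx => by linarith [(abs_le.mp (hfg x hx)).2]
  have hlower := hmono (φ := fun x => c * g x + (f x - g x))
    (fun x hx => ((hg x hx).const_mul c).add ((hf x hx).sub (hg x hx)))
    fun x hx => by linarith [(abs_le.mp (hfg x hx)).1]
  calc |f b - f a| - |g b - g a| ≤ |(f b - f a) - (g b - g a)| := abs_sub_abs_le_abs_sub _ _
    _ ≤ c * (g b - g a) := abs_le.mpr ⟨by linarith, by linarith⟩
    _ = c * |g b - g a| := by rw [abs_of_nonneg (sub_nonneg.mpr hg_le)]

theorem mul_min_one_le_of_hasDerivAt {d d' : ℝ → ℝ} {c₀ P R q : ℝ} (hc₀ : 0 < c₀)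
    (hP : 0 ≤ P) (hd : ∀ x, HasDerivAt d (d' x) x) (hd0 : d 0 = 0)
    (hconv : ∀ x, |x| ≤ P → c₀ ≤ d' x) (hmono : ∀ x, P ≤ |x| → |x| ≤ R → c₀ ≤ |d x|)
    (hq : 0 ≤ q) (hqR : q ≤ R) : c₀ * min q 1 ≤ d q := by
  have hlin : ∀ x, 0 ≤ x → x ≤ P → c₀ * x ≤ d x := fun x hx hxP => by
    have := le_of_hasDerivAt_nonneg hx (fun y _ => (hd y).sub ((hasDerivAt_id y).const_mul c₀))
      fun y hy => by
        simpa using hconv y (abs_le.mpr ⟨by linarith [hy.1], by linarith [hy.2]⟩)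
    simpa [hd0] using this
  rcases le_total q P with hqP | hPq
  · exact (mul_le_mul_of_nonneg_left (min_le_left q 1) hc₀.le).trans (hlin q hq hqP)
  refine (mul_le_of_le_one_right hc₀.le (min_le_right q 1)).trans ?_
  have hbound : ∀ x ∈ Icc P q, c₀ ≤ |d x| := fun x hx => by
    have hx0 : 0 ≤ x := hP.trans hx.1
    exact hmono x (by rw [abs_of_nonneg hx0]; exact hx.1)
      (by rw [abs_of_nonneg hx0]; exact hx.2.trans hqR)
  by_contra! hdq
  have hdq_neg : d q < 0 := by
    rcases le_abs'.mp (hbound q ⟨hPq, le_rfl⟩) with h | h <;> linarith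
  obtain ⟨r, hr, hdr⟩ := intermediate_value_Icc' hPq (HasDerivAt.continuousOn fun x _ => hd x)
    ⟨hdq_neg.le, (mul_nonneg hc₀.le hP).trans (hlin P hP le_rfl)⟩
  linarith [hbound r hr, abs_eq_zero.mpr hdr]

theorem mul_min_abs_one_le_sign_mul_of_hasDerivAt {d d' : ℝ → ℝ} {c₀ P R q : ℝ} (hc₀ : 0 < c₀)
    (hP : 0 ≤ P) (hd : ∀ x, HasDerivAt d (d' x) x) (hd0 : d 0 = 0)
    (hconv : ∀ x, |x| ≤ P → c₀ ≤ d' x) (hmono : ∀ x, P ≤ |x| → |x| ≤ R → c₀ ≤ |d x|)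
    (hq : |q| ≤ R) : c₀ * min |q| 1 ≤ Real.sign q * d q := by
  rcases lt_trichotomy q 0 with hneg | rfl | hpos
  · have hreflect := mul_min_one_le_of_hasDerivAt (d := fun x => -d (-x)) (d' := fun x => d' (-x))
      hc₀ hP (fun x => by simpa using ((hd (-x)).comp x (hasDerivAt_neg x)).fun_neg) (by simp [hd0])
      (fun x hx => hconv (-x) (by rwa [abs_neg])) (fun x h₁ h₂ => by
        simpa using hmono (-x) (by rwa [abs_neg]) (by rwa [abs_neg]))
      (neg_nonneg.mpr hneg.le) (by rwa [abs_of_neg hneg] at hq)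
    rw [abs_of_neg hneg, Real.sign_of_neg hneg]
    simpa using hreflect
  · simp [hd0]
  · rw [abs_of_pos hpos, Real.sign_of_pos hpos, one_mul]
    exact mul_min_one_le_of_hasDerivAt hc₀ hP hd hd0 hconv hmono hpos.le
      (by rwa [abs_of_pos hpos] at hq)

-- `TempleMap H p a g` is `templeProfile (fun q => H q a g) p` by definition.
def templeProfile (h : ℝ → ℝ) (q : ℝ) : ℝ :=
  Real.sign q * (h q - h 0) / h 0

section TempleProfile

variable {h h' : ℝ → ℝ} {x h'' : ℝ}

theorem hasDerivAt_templeProfile_of_ne_zero {d : ℝ} (hx : x ≠ 0) (hh : HasDerivAt h d x) :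
    HasDerivAt (templeProfile h) (Real.sign x * d / h 0) x :=
  (((hh.sub_const (h 0)).const_mul (Real.sign x)).div_const (h 0)).congr_of_eventuallyEq <| by
    filter_upwards [Real.sign_eventuallyEq_const hx] with y hy
    rw [templeProfile, hy]

theorem hasDerivAt_templeProfile_zero (hh : HasDerivAt h 0 0) :
    HasDerivAt (templeProfile h) 0 0 := by
  have hquot := (hh.sub_const (h 0)).div_const (h 0)
  rw [zero_div] at hquot
  have hprofile : templeProfile h = fun y => Real.sign y * ((h y - h 0) / h 0) :=
    funext fun y => mul_div_assoc _ _ _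
  exact hprofile ▸ hquot.sign_mul_of_zero (by simp)

theorem hasDerivAt_templeProfile (hh : ∀ y, HasDerivAt h (h' y) y) (hh0 : h' 0 = 0) (x : ℝ) :
    HasDerivAt (templeProfile h) (Real.sign x * h' x / h 0) x := by
  rcases eq_or_ne x 0 with rfl | hx
  · have hh0' := hh 0
    rw [hh0] at hh0'
    simpa using hasDerivAt_templeProfile_zero hh0'
  · exact hasDerivAt_templeProfile_of_ne_zero hx (hh x)

theorem iteratedDeriv_two_templeProfile (hx : x ≠ 0) (hh : ∀ y, HasDerivAt h (h' y) y)
    (hh' : HasDerivAt h' h'' x) :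
    iteratedDeriv 2 (templeProfile h) x = Real.sign x * h'' / h 0 := by
  have hderiv : deriv (templeProfile h) =ᶠ[𝓝 x] fun y => Real.sign x * h' y / h 0 := by
    filter_upwards [Real.sign_eventuallyEq_const hx, eventually_ne_nhds hx] with y hy hy0
    rw [(hasDerivAt_templeProfile_of_ne_zero hy0 (hh y)).deriv, hy]
  rw [iteratedDeriv_succ, iteratedDeriv_one]
  exact (((hh'.const_mul _).div_const _).congr_of_eventuallyEq hderiv).deriv

end TempleProfile

theorem ContDiff.uncurry_deriv {F : ℝ → ℝ → ℝ} {m n : WithTop ℕ∞}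
    (hF : ContDiff ℝ m (uncurry F)) (hnm : n + 1 ≤ m) :
    ContDiff ℝ n (uncurry fun g => deriv (F g)) :=
  (ContDiff.fderiv (f := fun x : ℝ × ℝ => F x.1)
    (hF.comp ((contDiff_fst.comp contDiff_fst).prodMk contDiff_snd)) contDiff_snd hnm).clm_apply
    contDiff_const

theorem ContDiff.hasDerivAt_deriv {f : ℝ → ℝ} (hf : ContDiff ℝ 2 f) (x : ℝ) :
    HasDerivAt (deriv f) (iteratedDeriv 2 f x) x := by
  rw [iteratedDeriv_succ, iteratedDeriv_one]
  exact ((hf.deriv' (n := 1)).differentiable one_ne_zero x).hasDerivAt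

theorem ne_zero_and_abs_le_of_mem_uIoo_zero {s q : ℝ} (hs : s ∈ uIoo 0 q) : s ≠ 0 ∧ |s| ≤ |q| := by
  rcases le_total 0 q with hq | hq
  · rw [uIoo_of_le hq] at hs
    exact ⟨hs.1.ne', by rw [abs_of_pos hs.1, abs_of_nonneg hq]; exact hs.2.le⟩
  · rw [uIoo_of_ge hq] at hs
    exact ⟨hs.2.ne, by rw [abs_of_neg hs.2, abs_of_nonpos hq]; linarith [hs.1]⟩

section ParametrizedProfile

variable {F : ℝ → ℝ → ℝ} {S : Set ℝ} {B R c₀ P M : ℝ}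

theorem ContDiff.uncurry_apply_left {n : WithTop ℕ∞} (hF : ContDiff ℝ n (uncurry F)) (g : ℝ) :
    ContDiff ℝ n (F g) :=
  hF.comp (contDiff_const.prodMk contDiff_id)

theorem ContDiff.differentiable_iteratedDeriv_two_apply (hF : ContDiff ℝ 3 (uncurry F))
    (x : ℝ) : Differentiable ℝ fun g => iteratedDeriv 2 (F g) x := by
  have h2 : ContDiff ℝ 1 (uncurry fun g => deriv (deriv (F g))) :=
    ((hF.uncurry_deriv (n := 2) (by norm_num)).uncurry_deriv (F := fun g => deriv (F g)) le_rfl)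
  simp only [iteratedDeriv_succ]
  exact (h2.comp (contDiff_id.prodMk contDiff_const)).differentiable one_ne_zero

theorem abs_iteratedDeriv_two_div_sub_le {x g₁ g₂ : ℝ} (hF : ContDiff ℝ 3 (uncurry F))
    (hS : Convex ℝ S) (hpos : ∀ g ∈ S, 0 < F g 0) (hx : x ≠ 0)
    (hmixed : ∀ g ∈ S, |deriv (fun h => iteratedDeriv 2 (templeProfile (F h)) x) g| ≤ B)
    (hg₁ : g₁ ∈ S) (hg₂ : g₂ ∈ S) :
    |iteratedDeriv 2 (F g₂) x / F g₂ 0 - iteratedDeriv 2 (F g₁) x / F g₁ 0| ≤ B * |g₂ - g₁| := by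
  have hΨ : ∀ h, iteratedDeriv 2 (templeProfile (F h)) x =
      Real.sign x * (iteratedDeriv 2 (F h) x / F h 0) := fun h => by
    have hFh := hF.uncurry_apply_left h
    rw [iteratedDeriv_two_templeProfile hx
      (fun y => (hFh.differentiable (by norm_num) y).hasDerivAt)
      ((hFh.of_le (by norm_num)).hasDerivAt_deriv x), mul_div_assoc]
  have hdiff : ∀ g ∈ S, DifferentiableAt ℝ (fun h => iteratedDeriv 2 (templeProfile (F h)) x) g :=
    fun g hg => funext hΨ ▸ ((hF.differentiable_iteratedDeriv_two_apply x g).div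
      ((hF.comp (contDiff_id.prodMk contDiff_const)).differentiable (by norm_num) g)
      (hpos g hg).ne').const_mul _
  have hmvt := hS.norm_image_sub_le_of_norm_deriv_le hdiff hmixed hg₁ hg₂
  rwa [hΨ, hΨ, Real.norm_eq_abs, Real.norm_eq_abs, ← mul_sub, abs_mul, Real.abs_sign_of_ne_zero hx,
    one_mul] at hmvt

theorem abs_deriv_div_sub_le {q g₁ g₂ : ℝ} (hF : ContDiff ℝ 3 (uncurry F)) (hS : Convex ℝ S)
    (hpos : ∀ g ∈ S, 0 < F g 0) (hd0 : ∀ g ∈ S, deriv (F g) 0 = 0)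
    (hmixed : ∀ g ∈ S, ∀ x, |x| ≤ R →
      |deriv (fun h => iteratedDeriv 2 (templeProfile (F h)) x) g| ≤ B)
    (hg₁ : g₁ ∈ S) (hg₂ : g₂ ∈ S) (hq : |q| ≤ R) :
    |deriv (F g₂) q / F g₂ 0 - deriv (F g₁) q / F g₁ 0| ≤ B * |g₂ - g₁| * |q| := by
  have hw := abs_sub_le_mul_abs_of_hasDerivAt (x := 0) (y := q)
    (w := fun y => deriv (F g₂) y / F g₂ 0 - deriv (F g₁) y / F g₁ 0)
    (w' := fun y => iteratedDeriv 2 (F g₂) y / F g₂ 0 - iteratedDeriv 2 (F g₁) y / F g₁ 0)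
    (fun s _ => ((((hF.uncurry_apply_left g₂).of_le (by norm_num)).hasDerivAt_deriv s).div_const
      _).sub ((((hF.uncurry_apply_left g₁).of_le (by norm_num)).hasDerivAt_deriv s).div_const _))
    (fun s hs => by
      obtain ⟨hs0, hsq⟩ := ne_zero_and_abs_le_of_mem_uIoo_zero hs
      exact abs_iteratedDeriv_two_div_sub_le hF hS hpos hs0
        (fun g hg => hmixed g hg s (hsq.trans hq)) hg₁ hg₂)
  simpa [hd0 g₁ hg₁, hd0 g₂ hg₂, mul_assoc] using hw

theorem mul_min_abs_one_le_sign_mul_deriv {g q : ℝ} (hF : ContDiff ℝ 3 (uncurry F))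
    (hc₀ : 0 < c₀) (hP : 0 ≤ P) (hd0 : deriv (F g) 0 = 0)
    (hconv : ∀ x, |x| ≤ P → c₀ ≤ iteratedDeriv 2 (F g) x)
    (hmono : ∀ x, P ≤ |x| → |x| ≤ R → c₀ ≤ |deriv (F g) x|) (hq : |q| ≤ R) :
    c₀ * min |q| 1 ≤ Real.sign q * deriv (F g) q :=
  mul_min_abs_one_le_sign_mul_of_hasDerivAt hc₀ hP
    ((hF.uncurry_apply_left g).of_le (by norm_num)).hasDerivAt_deriv hd0 hconv hmono hq

theorem abs_le_max_one_mul_min_abs_one {q R : ℝ} (hq : |q| ≤ R) : |q| ≤ max 1 R * min |q| 1 := by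
  rcases le_total |q| 1 with h | h
  · rw [min_eq_left h]
    exact le_mul_of_one_le_left (abs_nonneg q) (le_max_left 1 R)
  · rw [min_eq_right h, mul_one]
    exact hq.trans (le_max_right 1 R)

theorem abs_sign_mul_deriv_div_sub_le {q g₁ g₂ : ℝ} (hF : ContDiff ℝ 3 (uncurry F))
    (hS : Convex ℝ S) (hpos : ∀ g ∈ S, 0 < F g 0) (hM : ∀ g ∈ S, F g 0 ≤ M)
    (hd0 : ∀ g ∈ S, deriv (F g) 0 = 0) (hc₀ : 0 < c₀) (hP : 0 ≤ P)
    (hconv : ∀ g ∈ S, ∀ x, |x| ≤ P → c₀ ≤ iteratedDeriv 2 (F g) x)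
    (hmono : ∀ g ∈ S, ∀ x, P ≤ |x| → |x| ≤ R → c₀ ≤ |deriv (F g) x|)
    (hmixed : ∀ g ∈ S, ∀ x, |x| ≤ R →
      |deriv (fun h => iteratedDeriv 2 (templeProfile (F h)) x) g| ≤ B)
    (hg₁ : g₁ ∈ S) (hg₂ : g₂ ∈ S) (hq : |q| ≤ R) :
    |Real.sign q * deriv (F g₂) q / F g₂ 0 - Real.sign q * deriv (F g₁) q / F g₁ 0| ≤
      B * max 1 R * M / c₀ * |g₂ - g₁| * (Real.sign q * deriv (F g₁) q / F g₁ 0) := by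
  have hB : 0 ≤ B := (abs_nonneg _).trans (hmixed g₁ hg₁ q hq)
  have hF₁ : 0 < F g₁ 0 := hpos g₁ hg₁
  have hM₀ : 0 < M := hF₁.trans_le (hM g₁ hg₁)
  have hlow := mul_min_abs_one_le_sign_mul_deriv hF hc₀ hP (hd0 g₁ hg₁) (hconv g₁ hg₁)
    (hmono g₁ hg₁) hq
  calc |Real.sign q * deriv (F g₂) q / F g₂ 0 - Real.sign q * deriv (F g₁) q / F g₁ 0|
      = |Real.sign q| * |deriv (F g₂) q / F g₂ 0 - deriv (F g₁) q / F g₁ 0| := by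
        rw [← abs_mul, mul_sub, mul_div_assoc, mul_div_assoc]
    _ ≤ B * |g₂ - g₁| * |q| :=
        (mul_le_of_le_one_left (abs_nonneg _) (Real.abs_sign_le_one q)).trans
          (abs_deriv_div_sub_le hF hS hpos hd0 hmixed hg₁ hg₂ hq)
    _ ≤ B * |g₂ - g₁| * (max 1 R * min |q| 1) := by
        gcongr
        exact abs_le_max_one_mul_min_abs_one hq
    _ = B * max 1 R * M / c₀ * |g₂ - g₁| * (c₀ * min |q| 1 / M) := by
        field_simp
    _ ≤ B * max 1 R * M / c₀ * |g₂ - g₁| * (Real.sign q * deriv (F g₁) q / F g₁ 0) := by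
        gcongr
        exacts [(by positivity : (0 : ℝ) ≤ c₀ * min |q| 1).trans hlow, hM g₁ hg₁]

theorem abs_templeProfile_sub_sub_le {pl pr g₁ g₂ : ℝ} (hF : ContDiff ℝ 3 (uncurry F))
    (hS : Convex ℝ S) (hpos : ∀ g ∈ S, 0 < F g 0) (hM : ∀ g ∈ S, F g 0 ≤ M)
    (hd0 : ∀ g ∈ S, deriv (F g) 0 = 0) (hc₀ : 0 < c₀) (hP : 0 ≤ P)
    (hconv : ∀ g ∈ S, ∀ x, |x| ≤ P → c₀ ≤ iteratedDeriv 2 (F g) x)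
    (hmono : ∀ g ∈ S, ∀ x, P ≤ |x| → |x| ≤ R → c₀ ≤ |deriv (F g) x|)
    (hmixed : ∀ g ∈ S, ∀ x, |x| ≤ R →
      |deriv (fun h => iteratedDeriv 2 (templeProfile (F h)) x) g| ≤ B)
    (hpl : |pl| ≤ R) (hpr : |pr| ≤ R) (hg₁ : g₁ ∈ S) (hg₂ : g₂ ∈ S) :
    |templeProfile (F g₂) pr - templeProfile (F g₂) pl|
        - |templeProfile (F g₁) pr - templeProfile (F g₁) pl|
      ≤ B * max 1 R * M / c₀ * |g₂ - g₁| * |templeProfile (F g₁) pr - templeProfile (F g₁) pl| := by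
  have hR : ∀ x ∈ uIcc pl pr, |x| ≤ R := fun x hx =>
    abs_le.mpr (uIcc_subset_Icc (abs_le.mp hpl) (abs_le.mp hpr) hx)
  have hderiv : ∀ g ∈ S, ∀ x, HasDerivAt (templeProfile (F g))
      (Real.sign x * deriv (F g) x / F g 0) x := fun g hg =>
    hasDerivAt_templeProfile (fun y => ((hF.uncurry_apply_left g).differentiable
      (by norm_num) y).hasDerivAt) (hd0 g hg)
  refine abs_sub_abs_le_mul_abs_of_hasDerivAt (fun x _ => hderiv g₂ hg₂ x)
    (fun x _ => hderiv g₁ hg₁ x) (fun x hx => div_nonneg ?_ (hpos g₁ hg₁).le)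
    (fun x hx => abs_sign_mul_deriv_div_sub_le hF hS hpos hM hd0 hc₀ hP hconv hmono hmixed hg₁ hg₂
      (hR x hx))
  exact (by positivity : (0 : ℝ) ≤ c₀ * min |x| 1).trans
    (mul_min_abs_one_le_sign_mul_deriv hF hc₀ hP (hd0 g₁ hg₁) (hconv g₁ hg₁) (hmono g₁ hg₁)
      (hR x hx))

end ParametrizedProfile

theorem interaction_estimate_p_wave_g_wave_general
    (H : ℝ → ℝ → ℝ → ℝ)
    (hsmooth : ContDiff ℝ 3 (fun z : ℝ × ℝ × ℝ => H z.1 z.2.1 z.2.2))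
    (aLo aHi gLo gHi Cbar P c₀ C₀ B : ℝ)
    (hP : 0 < P) (hc₀ : 0 < c₀)
    (hHpos : ∀ a g : ℝ, a ∈ Set.Icc aLo aHi → g ∈ Set.Icc gLo gHi → 0 < H 0 a g)
    (hconv : ∀ p a g : ℝ, |p| ≤ P → a ∈ Set.Icc aLo aHi → g ∈ Set.Icc gLo gHi →
      c₀ ≤ iteratedDeriv 2 (fun q => H q a g) p ∧
        iteratedDeriv 2 (fun q => H q a g) p ≤ C₀)
    (hmono : ∀ p a g : ℝ, P ≤ |p| → |p| ≤ Cbar →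
      a ∈ Set.Icc aLo aHi → g ∈ Set.Icc gLo gHi →
      c₀ ≤ |deriv (fun q => H q a g) p| ∧ |deriv (fun q => H q a g) p| ≤ C₀)
    (hd0 : ∀ a g : ℝ, deriv (fun q => H q a g) 0 = 0)
    (hmixed : ∀ p a g : ℝ, |p| ≤ Cbar →
      a ∈ Set.Icc aLo aHi → g ∈ Set.Icc gLo gHi →
      |deriv (fun h => deriv (fun q => TempleMap H q a h) p) g| ≤ B ∧
      |deriv (fun h => iteratedDeriv 2 (fun q => TempleMap H q a h) p) g| ≤ B) :
    ∃ C : ℝ, ∀ pl pr a gm gp : ℝ, |pl| ≤ Cbar → |pr| ≤ Cbar →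
      a ∈ Set.Icc aLo aHi → gm ∈ Set.Icc gLo gHi → gp ∈ Set.Icc gLo gHi →
      |TempleMap H pr a gp - TempleMap H pl a gp|
          - |TempleMap H pr a gm - TempleMap H pl a gm|
        ≤ C * |gp - gm| * |TempleMap H pr a gm - TempleMap H pl a gm| := by
  obtain ⟨M, hM⟩ := (isCompact_Icc.prod isCompact_Icc).exists_bound_of_continuousOn
    (f := fun x : ℝ × ℝ => H 0 x.1 x.2)
    (hsmooth.continuous.comp (continuous_const.prodMk continuous_id)).continuousOn
  refine ⟨B * max 1 Cbar * M / c₀, fun pl pr a gm gp hpl hpr ha hgm hgp => ?_⟩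
  exact abs_templeProfile_sub_sub_le (F := fun g q => H q a g) (hsmooth.comp
    (contDiff_snd.prodMk (contDiff_const.prodMk contDiff_fst)))
    (convex_Icc gLo gHi) (fun g hg => hHpos a g ha hg)
    (fun g hg => (le_abs_self _).trans (hM (a, g) ⟨ha, hg⟩)) (fun g _ => hd0 a g) hc₀ hP.le
    (fun g hg x hx => (hconv x a g hx ha hg).1) (fun g hg x h₁ h₂ => (hmono x a g h₁ h₂ ha hg).1)
    (fun g hg x hx => (hmixed x a g hx ha hg).2) hpl hpr hgm hgp

/-- **Interaction estimate (3.17): a `p`-wave crossing a `g`-wave.**  Let `H(p,a,g)`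
be `C³` with `H(0,a,g) > 0`, let `Ψ` be the Temple singular mapping, and assume on
the region `|p| ≤ C̄`, `a ∈ [a̲,ā]`, `g ∈ [g̲,ḡ]`: uniform convexity bounds
`0 < c₀ ≤ H_{pp} ≤ C₀` for `|p| ≤ P` and `0 < c₀ ≤ |H_p| ≤ C₀` for `P ≤ |p| ≤ C̄`;
`p ↦ H(p,a,g)` even with `H_p(0,a,g) = 0`; and bounded mixed derivatives `Ψ_{pg}`,
`Ψ_{ppg}`.  Then there is a constant `C`, depending only on those bounds, with
`|Ψ(p_r,a,g⁺) − Ψ(p_l,a,g⁺)| − |Ψ(p_r,a,g⁻) − Ψ(p_l,a,g⁻)|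
  ≤ C |g⁺ − g⁻| |Ψ(p_r,a,g⁻) − Ψ(p_l,a,g⁻)|`. -/
theorem interaction_estimate_p_wave_g_wave
    (H : ℝ → ℝ → ℝ → ℝ)
    (hsmooth : ContDiff ℝ 3 (fun z : ℝ × ℝ × ℝ => H z.1 z.2.1 z.2.2))
    (aLo aHi gLo gHi Cbar P c₀ C₀ B : ℝ)
    (haa : aLo ≤ aHi) (hgg : gLo ≤ gHi)
    (hP : 0 < P) (hPC : P ≤ Cbar) (hc₀ : 0 < c₀) (hcC : c₀ ≤ C₀)
    (hHpos : ∀ a g : ℝ, a ∈ Set.Icc aLo aHi → g ∈ Set.Icc gLo gHi → 0 < H 0 a g)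
    (hconv : ∀ p a g : ℝ, |p| ≤ P → a ∈ Set.Icc aLo aHi → g ∈ Set.Icc gLo gHi →
      c₀ ≤ iteratedDeriv 2 (fun q => H q a g) p ∧
        iteratedDeriv 2 (fun q => H q a g) p ≤ C₀)
    (hmono : ∀ p a g : ℝ, P ≤ |p| → |p| ≤ Cbar →
      a ∈ Set.Icc aLo aHi → g ∈ Set.Icc gLo gHi →
      c₀ ≤ |deriv (fun q => H q a g) p| ∧ |deriv (fun q => H q a g) p| ≤ C₀)
    (heven : ∀ p a g : ℝ, H (-p) a g = H p a g)
    (hd0 : ∀ a g : ℝ, deriv (fun q => H q a g) 0 = 0)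
    (hmixed : ∀ p a g : ℝ, |p| ≤ Cbar →
      a ∈ Set.Icc aLo aHi → g ∈ Set.Icc gLo gHi →
      |deriv (fun h => deriv (fun q => TempleMap H q a h) p) g| ≤ B ∧
      |deriv (fun h => iteratedDeriv 2 (fun q => TempleMap H q a h) p) g| ≤ B) :
    ∃ C : ℝ, ∀ pl pr a gm gp : ℝ, |pl| ≤ Cbar → |pr| ≤ Cbar →
      a ∈ Set.Icc aLo aHi → gm ∈ Set.Icc gLo gHi → gp ∈ Set.Icc gLo gHi →
      |TempleMap H pr a gp - TempleMap H pl a gp|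
          - |TempleMap H pr a gm - TempleMap H pl a gm|
        ≤ C * |gp - gm| * |TempleMap H pr a gm - TempleMap H pl a gm| :=
  interaction_estimate_p_wave_g_wave_general H hsmooth aLo aHi gLo gHi Cbar P c₀ C₀ B hP hc₀ hHpos
    hconv hmono hd0 hmixed

end
end
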